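/- arXiv:2004.13216 — 3 statements merged into one kernel-verified Lean document; each statement's English description precedes it below -/
import Mathlib

section
/- Let s, i : ℝ → ℝ be differentiable functions satisfying the non-dimensional SIR equations s' = -R₀·i·s and i' = (R₀·s - 1)·i with R₀ ≥ 0 and nonnegative initial conditions s(0) = s₀ ≥ 0, i(0) = i₀ ≥ 0. Then s(τ) ≥ 0 and i(τ) ≥ 0 for all τ ≥ 0. -/
/-!
Each equation is linear in its own unknown, `x' = f x` with `f` continuous (`f = -R₀ i` for `s`,
`f = R₀ s - 1` for `i`). With `F` an antiderivative of `f`, the product `x · exp (-F)` has zero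
derivative, so `x` keeps the sign of its initial value.
-/

open Real

theorem mul_exp_neg_eq_of_hasDerivAt {f F x : ℝ → ℝ} (hF : ∀ t, HasDerivAt F (f t) t)
    (hx : ∀ t, HasDerivAt x (f t * x t) t) (a b : ℝ) :
    x a * exp (-F a) = x b * exp (-F b) := by
  have hderiv : ∀ t, HasDerivAt (fun t => x t * exp (-F t)) 0 t := fun t => by
    refine ((hx t).fun_mul (hF t).neg.exp).congr_deriv ?_
    ring
  exact is_const_of_deriv_eq_zero (fun t => (hderiv t).differentiableAt)
    (fun t => (hderiv t).deriv) a b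

theorem nonneg_of_hasDerivAt_mul_self {f x : ℝ → ℝ} (hf : Continuous f)
    (hx : ∀ t, HasDerivAt x (f t * x t) t) {a : ℝ} (ha : 0 ≤ x a) (b : ℝ) : 0 ≤ x b := by
  have hF : ∀ t, HasDerivAt (fun τ => ∫ u in a..τ, f u) (f t) t := fun t =>
    (hf.integral_hasStrictDerivAt a t).hasDerivAt
  have hprod : 0 ≤ x b * exp (-∫ u in a..b, f u) := by
    rw [mul_exp_neg_eq_of_hasDerivAt hF hx b a]
    positivity
  exact (mul_nonneg_iff_of_pos_right (exp_pos _)).mp hprod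

theorem sir_nonneg_general (R₀ s₀ i₀ : ℝ) (s i : ℝ → ℝ)
    (hs : Differentiable ℝ s) (hi : Differentiable ℝ i)
    (hode_s : ∀ τ, deriv s τ = -R₀ * i τ * s τ)
    (hode_i : ∀ τ, deriv i τ = (R₀ * s τ - 1) * i τ)
    (hs0 : s 0 = s₀) (hi0 : i 0 = i₀) (hs₀ : 0 ≤ s₀) (hi₀ : 0 ≤ i₀) :
    ∀ τ : ℝ, 0 ≤ τ → 0 ≤ s τ ∧ 0 ≤ i τ := by
  intro τ _
  have hs_lin : ∀ t, HasDerivAt s (-R₀ * i t * s t) t := fun t => hode_s t ▸ (hs t).hasDerivAt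
  have hi_lin : ∀ t, HasDerivAt i ((R₀ * s t - 1) * i t) t := fun t =>
    hode_i t ▸ (hi t).hasDerivAt
  exact ⟨nonneg_of_hasDerivAt_mul_self (continuous_const.mul hi.continuous) hs_lin
      (hs0 ▸ hs₀) τ,
    nonneg_of_hasDerivAt_mul_self ((continuous_const.mul hs.continuous).sub continuous_const)
      hi_lin (hi0 ▸ hi₀) τ⟩

theorem sir_nonneg (R₀ s₀ i₀ : ℝ) (s i : ℝ → ℝ)
    (hR : 0 ≤ R₀) (hs : Differentiable ℝ s) (hi : Differentiable ℝ i)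
    (hode_s : ∀ τ, deriv s τ = -R₀ * i τ * s τ)
    (hode_i : ∀ τ, deriv i τ = (R₀ * s τ - 1) * i τ)
    (hs0 : s 0 = s₀) (hi0 : i 0 = i₀) (hs₀ : 0 ≤ s₀) (hi₀ : 0 ≤ i₀) :
    ∀ τ : ℝ, 0 ≤ τ → 0 ≤ s τ ∧ 0 ≤ i τ :=
  sir_nonneg_general R₀ s₀ i₀ s i hs hi hode_s hode_i hs0 hi0 hs₀ hi₀
end

section
/- Let s, i : ℝ → ℝ solve the non-dimensional SIR system s' = -R₀·i·s, i' = (R₀·s - 1)·i on [0, T] with s(τ) > 0 and i(τ) > 0 for all τ ∈ [0, T], R₀ > 0, s(0) = s₀, i(0) = i₀. Then for all τ ∈ [0, T]: i(τ) = i₀ + s₀ - s(τ) - (1/R₀)·log(s₀ / s(τ)). -/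
/-!
Along a solution with `s > 0`, the quantity `i + s - R₀⁻¹ log s` has derivative
`(R₀ s - 1) i - R₀ i s + i = 0`, so it is a first integral: it is constant on `[0, T]`,
and comparing its values at `0` and `τ` gives the relation.
-/

open Set Real

noncomputable def sirFirstIntegral (R₀ : ℝ) (s i : ℝ → ℝ) (τ : ℝ) : ℝ :=
  i τ + s τ - (1 / R₀) * log (s τ)

theorem hasDerivAt_sirFirstIntegral {R₀ x : ℝ} {s i : ℝ → ℝ} (hR : R₀ ≠ 0)
    (hs : HasDerivAt s (-R₀ * i x * s x) x) (hi : HasDerivAt i ((R₀ * s x - 1) * i x) x)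
    (hsx : s x ≠ 0) : HasDerivAt (sirFirstIntegral R₀ s i) 0 x := by
  have h : HasDerivAt (sirFirstIntegral R₀ s i)
      ((R₀ * s x - 1) * i x + -R₀ * i x * s x - 1 / R₀ * (-R₀ * i x * s x / s x)) x :=
    (hi.add hs).sub ((hs.log hsx).const_mul (1 / R₀))
  convert h using 1
  field_simp
  ring

theorem eqOn_Icc_of_hasDerivAt_zero {f : ℝ → ℝ} {a b : ℝ}
    (hf : ∀ x ∈ Icc a b, HasDerivAt f 0 x) : ∀ x ∈ Icc a b, f x = f a :=
  constant_of_has_deriv_right_zero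
    (fun x hx => (hf x hx).continuousAt.continuousWithinAt)
    (fun x hx => (hf x (Ico_subset_Icc_self hx)).hasDerivWithinAt)

theorem sir_phase_space_general (R₀ s₀ i₀ T : ℝ) (s i : ℝ → ℝ)
    (hR : 0 < R₀)
    (hs : Differentiable ℝ s) (hi : Differentiable ℝ i)
    (hode_s : ∀ τ ∈ Set.Icc (0:ℝ) T, deriv s τ = -R₀ * i τ * s τ)
    (hode_i : ∀ τ ∈ Set.Icc (0:ℝ) T, deriv i τ = (R₀ * s τ - 1) * i τ)
    (hspos : ∀ τ ∈ Set.Icc (0:ℝ) T, 0 < s τ)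
    (hs0 : s 0 = s₀) (hi0 : i 0 = i₀) :
    ∀ τ ∈ Set.Icc (0:ℝ) T,
      i τ = i₀ + s₀ - s τ - (1 / R₀) * Real.log (s₀ / s τ) := by
  have hconst := eqOn_Icc_of_hasDerivAt_zero fun x hx =>
    hasDerivAt_sirFirstIntegral hR.ne' (hode_s x hx ▸ (hs x).hasDerivAt)
      (hode_i x hx ▸ (hi x).hasDerivAt) (hspos x hx).ne'
  intro τ hτ
  have hτ0 := hconst τ hτ
  have hs₀ : s₀ ≠ 0 := hs0 ▸ (hspos 0 ⟨le_rfl, hτ.1.trans hτ.2⟩).ne'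
  rw [log_div hs₀ (hspos τ hτ).ne']
  simp only [sirFirstIntegral, hs0, hi0] at hτ0
  linarith

theorem sir_phase_space (R₀ s₀ i₀ T : ℝ) (s i : ℝ → ℝ)
    (hR : 0 < R₀) (hT : 0 < T)
    (hs : Differentiable ℝ s) (hi : Differentiable ℝ i)
    (hode_s : ∀ τ ∈ Set.Icc (0:ℝ) T, deriv s τ = -R₀ * i τ * s τ)
    (hode_i : ∀ τ ∈ Set.Icc (0:ℝ) T, deriv i τ = (R₀ * s τ - 1) * i τ)
    (hspos : ∀ τ ∈ Set.Icc (0:ℝ) T, 0 < s τ)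
    (hipos : ∀ τ ∈ Set.Icc (0:ℝ) T, 0 < i τ)
    (hs0 : s 0 = s₀) (hi0 : i 0 = i₀) :
    ∀ τ ∈ Set.Icc (0:ℝ) T,
      i τ = i₀ + s₀ - s τ - (1 / R₀) * Real.log (s₀ / s τ) :=
  sir_phase_space_general R₀ s₀ i₀ T s i hR hs hi hode_s hode_i hspos hs0 hi0
end

section
/- Let R₀ > 1 and 0 < s₀ ≤ 1. Then the equation log(s₀/x) = R₀·(1 - x) has a solution x with 0 < x < s₀. -/
/-! The function `x ↦ log (s₀ / x) - R₀ (1 - x)` tends to `+∞` as `x → 0⁺`. It is negative at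
`x = s₀ / t` for any `1 < t < R₀`, because `log t ≤ t - 1 < R₀ (1 - 1 / t)`. The intermediate value
theorem on `(0, s₀ / t]` then gives a root below `s₀`. -/

open Filter Set Topology

theorem exists_mem_Ioc_eq_of_tendsto_nhdsGT_atTop {f : ℝ → ℝ} {a c y : ℝ} (hac : a < c)
    (hf : ContinuousOn f (Ioc a c)) (hlim : Tendsto f (𝓝[>] a) atTop) (hy : f c ≤ y) :
    ∃ x ∈ Ioc a c, f x = y := by
  have : NeBot (𝓝[Ioc a c] a) := left_nhdsWithin_Ioc_neBot hac
  have hlim' : Tendsto f (𝓝[Ioc a c] a) atTop :=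
    hlim.mono_left (nhdsWithin_mono _ Ioc_subset_Ioi_self)
  exact isPreconnected_Ioc.intermediate_value_Ici (l := 𝓝[Ioc a c] a) (right_mem_Ioc.2 hac)
    inf_le_right hf hlim' hy

namespace Real

theorem log_lt_mul_one_sub_div {R s t : ℝ} (hs : s ≤ 1) (ht : 1 < t) (htR : t < R) :
    log t < R * (1 - s / t) := by
  have ht0 : 0 < t := zero_lt_one.trans ht
  calc log t ≤ t - 1 := log_le_sub_one_of_pos ht0
    _ < R * (1 - 1 / t) := by
      have hgap : R * (1 - 1 / t) - (t - 1) = (R - t) * (t - 1) / t := by field_simp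
      have : 0 < (R - t) * (t - 1) / t := div_pos (mul_pos (sub_pos.2 htR) (sub_pos.2 ht)) ht0
      linarith
    _ ≤ R * (1 - s / t) := by gcongr; linarith

theorem tendsto_log_div_sub_mul_nhdsGT_zero (R : ℝ) {s : ℝ} (hs : 0 < s) :
    Tendsto (fun x => log (s / x) - R * (1 - x)) (𝓝[>] 0) atTop := by
  have hdiv : Tendsto (fun x : ℝ => s / x) (𝓝[>] 0) atTop := by
    simpa only [div_eq_mul_inv] using tendsto_inv_nhdsGT_zero.const_mul_atTop hs
  have hlin : Tendsto (fun x : ℝ => R * (1 - x)) (𝓝[>] 0) (𝓝 (R * (1 - 0))) :=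
    (Continuous.tendsto (by fun_prop) 0).mono_left nhdsWithin_le_nhds
  exact (tendsto_log_atTop.comp hdiv).atTop_add hlin.neg

theorem continuousOn_log_div_sub_mul (R : ℝ) {s : ℝ} (hs : s ≠ 0) :
    ContinuousOn (fun x => log (s / x) - R * (1 - x)) (Ioi 0) := by
  have hdiv : ContinuousOn (fun x : ℝ => s / x) (Ioi 0) :=
    continuousOn_const.div continuousOn_id fun x hx => ne_of_gt hx
  exact (hdiv.log fun x hx => div_ne_zero hs (ne_of_gt hx)).sub (by fun_prop)

end Real

theorem sir_final_size_root (R₀ s₀ : ℝ) (hR : 1 < R₀) (hs₀ : 0 < s₀) (hs₀1 : s₀ ≤ 1) :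
    ∃ x : ℝ, 0 < x ∧ x < s₀ ∧ Real.log (s₀ / x) = R₀ * (1 - x) := by
  obtain ⟨t, ht1, htR⟩ := exists_between hR
  have hc : Real.log (s₀ / (s₀ / t)) - R₀ * (1 - s₀ / t) ≤ 0 := by
    rw [div_div_cancel₀ hs₀.ne']
    linarith [Real.log_lt_mul_one_sub_div hs₀1 ht1 htR]
  obtain ⟨x, ⟨hx0, hxc⟩, hx⟩ := exists_mem_Ioc_eq_of_tendsto_nhdsGT_atTop
    (div_pos hs₀ (zero_lt_one.trans ht1))
    ((Real.continuousOn_log_div_sub_mul R₀ hs₀.ne').mono Ioc_subset_Ioi_self)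
    (Real.tendsto_log_div_sub_mul_nhdsGT_zero R₀ hs₀) hc
  exact ⟨x, hx0, hxc.trans_lt (div_lt_self hs₀ ht1), sub_eq_zero.1 hx⟩
end
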